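/- Let (M,𝓐,m) be a measure space, π : M → M̃ measurable, m̃ := π_*m. Let (ℰ,𝓗) be a closed bilinear form on L²(m) with constants α₀, K, and let ℰᵃ be an antisymmetric bilinear form on 𝓗 satisfying |ℰᵃ(u,v)| ≤ K' ℰ_{α₀+1}(u,u)^{1/2} ℰ_{α₀+1}(v,v)^{1/2} for all u,v ∈ 𝓗 and some K' < ∞; for κ ∈ ℝ set ℰ^κ := ℰ + κℰᵃ (a closed form on L²(m) with the same α₀). Define 𝓗̃ := {ũ ∈ L²(m̃) : ũ∘π ∈ 𝓗} and Ẽ(ũ,ṽ) := ℰ(ũ∘π, ṽ∘π), and assume 𝓗̃ is dense in L²(m̃). Assume moreover that for every u ∈ 𝓗: (ℰᵃ(u,v) = 0 for all v ∈ 𝓗) if and only if (there exists ũ ∈ 𝓗̃ with u = ũ∘π in L²(m)). Then for every sequence κ_n → ∞, the forms (ℰ^{κ_n}, 𝓗) Mosco-converge to (Ẽ, 𝓗̃), i.e. conditions (F1) and (F2) hold with 𝓛_n = L²(m), 𝓛 = L²(m̃) and Φ_n ũ := ũ∘π. -/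

import Mathlib

/-!
The inner product `ℰ^s_{α₀+1}` turns `𝓗` into a Hilbert space `W`, on which `a := ℰ_{α₀+1}`
is bounded with `a(x, x) = ‖x‖²` and `b := ℰᵃ` is bounded and antisymmetric, so that `a + κ b`
is coercive for every `κ`. By hypothesis `ker b` consists exactly of the pullbacks `ũ ∘ π`.

(F1) If `Θⁿ(uₙ) < c` frequently, testing with `v = uₙ` bounds `‖uₙ‖_𝓗`, and testing with an
arbitrary `v` gives `|b(v, uₙ)| ≤ C ‖v‖ / κₙ`. A weak cluster point `z` of `(uₙ)` in `W` therefore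
lies in `ker b`, so it is a pullback, and testing the weak convergence against pullbacks
identifies it with `ũ ∘ π`.

(F2) For `g̃ ∈ L²(m̃)` let `Vₙ` solve `(a + κₙ b)(Vₙ, ·) = ⟨g̃ ∘ π, ·⟩`. A penalty argument shows
`Vₙ → S g̃` in `W`, where `S g̃ ∈ ker b` solves `a(S g̃, ·) = ⟨g̃ ∘ π, ·⟩` on `ker b`; moreover
`ℰ^{κₙ}_{α₀+1}(Vₙ, uₙ) = ⟨g̃ ∘ π, uₙ⟩ → ⟨g̃, ũ⟩ = ℰ_{α₀+1}(S g̃, ũ ∘ π)`. The `S g̃` are dense in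
`ker b`, because the inclusion `ker b → L²(m)` is injective with values in the pullbacks, so a
diagonal choice of sources `g̃ₙ` yields the recovery sequence.
-/

open Filter Topology
open scoped RealInnerProductSpace

noncomputable section

/-- The `𝓗`-norm associated to a bilinear form `E` with constant `α₀`:
`‖u‖_𝓗 = (ℰ^s_{α₀+1}(u,u))^{1/2} = (E(u,u) + (α₀+1)⟨u,u⟩_𝓛)^{1/2}`. -/
def Hnorm {L : Type*} [NormedAddCommGroup L] [InnerProductSpace ℝ L]
    (E : L → L → ℝ) (α₀ : ℝ) (u : L) : ℝ :=
  Real.sqrt (E u u + (α₀ + 1) * ⟪u, u⟫)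

/-- `(ℰ, 𝓗)` is a closed bilinear form on the real Hilbert space `L` with constants
`α₀ ∈ ℝ` and `K ≥ 1`: `𝓗` is a dense subspace, `E` is bilinear on `𝓗`, the symmetric part
`ℰ^s_{α₀}` is positive (hence `ℰ^s_{α₀+1}` is positive definite and dominates the `𝓛`-norm),
`𝓗` is complete for the `𝓗`-norm (ℰ.1), and the weak sector condition (ℰ.2) holds. -/
structure IsClosedForm {L : Type*} [NormedAddCommGroup L] [InnerProductSpace ℝ L]
    (E : L → L → ℝ) (H : Submodule ℝ L) (α₀ K : ℝ) : Prop where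
  one_le_K : 1 ≤ K
  dense_dom : Dense (H : Set L)
  add_left : ∀ u v w : L, u ∈ H → v ∈ H → w ∈ H → E (u + v) w = E u w + E v w
  add_right : ∀ u v w : L, u ∈ H → v ∈ H → w ∈ H → E u (v + w) = E u v + E u w
  smul_left : ∀ (c : ℝ) (u v : L), u ∈ H → v ∈ H → E (c • u) v = c * E u v
  smul_right : ∀ (c : ℝ) (u v : L), u ∈ H → v ∈ H → E u (c • v) = c * E u v
  nonneg : ∀ u ∈ H, 0 ≤ E u u + α₀ * ⟪u, u⟫
  hilbert : ∀ u : ℕ → L, (∀ n, u n ∈ H) →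
      (∀ ε > (0:ℝ), ∃ N : ℕ, ∀ m ≥ N, ∀ n ≥ N, Hnorm E α₀ (u m - u n) < ε) →
      ∃ l ∈ H, Tendsto (fun n => Hnorm E α₀ (u n - l)) atTop (𝓝 0)
  sector : ∀ u ∈ H, ∀ v ∈ H,
      |E u v + (α₀ + 1) * ⟪u, v⟫| ≤ K * Hnorm E α₀ u * Hnorm E α₀ v

/-- `Θ(u) = sup { ℰ_{α₀+1}(v,u) : v ∈ 𝓗, ‖v‖_𝓗 = 1 }`. -/
def Theta {L : Type*} [NormedAddCommGroup L] [InnerProductSpace ℝ L]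
    (E : L → L → ℝ) (H : Submodule ℝ L) (α₀ : ℝ) (u : L) : ℝ :=
  sSup {x : ℝ | ∃ v ∈ H, Hnorm E α₀ v = 1 ∧ x = E v u + (α₀ + 1) * ⟪v, u⟫}

/-- The composition operator `u ↦ u ∘ π` from `L²(π_* m)` to `L²(m)`
(a linear isometry, since `π_* m` is the pushforward of `m` by `π`). -/
def Cmp {M : Type*} [MeasurableSpace M] {N : Type*} [MeasurableSpace N]
    (m : MeasureTheory.Measure M) (π : M → N) (hπ : Measurable π)
    (u : MeasureTheory.Lp ℝ 2 (m.map π)) : MeasureTheory.Lp ℝ 2 m :=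
  MeasureTheory.MemLp.toLp ((u : N → ℝ) ∘ π)
    ((MeasureTheory.memLp_map_measure_iff
        (MeasureTheory.Lp.aestronglyMeasurable u) hπ.aemeasurable).mp
      (MeasureTheory.Lp.memLp u))

theorem Filter.exists_tendsto_atTop_eventually_diag {P : ℕ → ℕ → Prop}
    (h : ∀ k, ∀ᶠ n in atTop, P k n) :
    ∃ k : ℕ → ℕ, Tendsto k atTop atTop ∧ ∀ᶠ n in atTop, P (k n) n := by
  choose N hN using fun k => eventually_atTop.1 (h k)
  refine ⟨fun n => Nat.findGreatest (fun k => N k ≤ n) n, ?_, ?_⟩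
  · refine tendsto_atTop_atTop.2 fun k => ⟨max (N k) k, fun n hn => ?_⟩
    exact Nat.le_findGreatest (le_of_max_le_right hn) (le_of_max_le_left hn)
  · filter_upwards [eventually_ge_atTop (N 0)] with n hn
    exact hN _ _ (Nat.findGreatest_spec (P := fun k => N k ≤ n) (Nat.zero_le n) hn)

theorem exists_tendsto_diag_of_mem_closure_range {ι X : Type*} [PseudoMetricSpace X]
    {F : ι → ℕ → X} {G : ι → X} {x : X} (hF : ∀ i, Tendsto (F i) atTop (𝓝 (G i)))
    (hx : x ∈ closure (Set.range G)) :
    ∃ i : ℕ → ι, Tendsto (fun n => F (i n) n) atTop (𝓝 x) := by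
  choose i hi using Metric.mem_closure_range_iff_nat.1 hx
  obtain ⟨k, hk, hkn⟩ := exists_tendsto_atTop_eventually_diag
    (P := fun k n => dist (F (i k) n) (G (i k)) < 1 / ((k : ℝ) + 1))
    fun k => Metric.tendsto_nhds.1 (hF (i k)) _ Nat.one_div_pos_of_nat
  have hε : Tendsto (fun n => 2 * (1 / ((k n : ℝ) + 1))) atTop (𝓝 0) := by
    simpa using (tendsto_one_div_add_atTop_nhds_zero_nat (𝕜 := ℝ) |>.comp hk).const_mul 2
  refine ⟨i ∘ k, tendsto_iff_dist_tendsto_zero.2 <|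
    squeeze_zero' (.of_forall fun _ => dist_nonneg) ?_ hε⟩
  filter_upwards [hkn] with n hn
  have := dist_triangle (F (i (k n)) n) (G (i (k n))) x
  rw [dist_comm (G _)] at this
  simp only [Function.comp_apply]
  linarith [hi (k n)]

theorem le_of_sq_le_mul {a c : ℝ} (hc : 0 ≤ c) (h : a ^ 2 ≤ c * a) : a ≤ c := by
  nlinarith

theorem tendsto_zero_of_abs_mul_le {ι : Type*} {l : Filter ι} {κ x : ι → ℝ} {c : ℝ}
    (hκ : Tendsto κ l atTop) (h : ∀ᶠ i in l, |κ i * x i| ≤ c) : Tendsto x l (𝓝 0) := by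
  have := hκ.inv_tendsto_atTop.zero_mul_isBoundedUnder_le (g := fun i => κ i * x i)
    ⟨c, by simpa only [eventually_map, Function.comp_apply, Real.norm_eq_abs] using h⟩
  refine this.congr' ?_
  filter_upwards [hκ.eventually_gt_atTop 0] with i hi
  simp only [Pi.inv_apply]
  field_simp

theorem Filter.exists_frequently_lt_of_liminf_lt_top {θ : ℕ → ℝ}
    (h : liminf (fun n => (θ n : EReal)) atTop < ⊤) : ∃ c : ℝ, ∃ᶠ n in atTop, θ n < c := by
  obtain ⟨c, hc, -⟩ := EReal.exists_between_coe_real h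
  exact ⟨c, (frequently_lt_of_liminf_lt (by isBoundedDefault) hc).mono
    fun n hn => EReal.coe_lt_coe_iff.1 hn⟩

theorem ContinuousLinearMap.abs_apply_le_of_sSup_image_sphere_le {W : Type*}
    [NormedAddCommGroup W] [NormedSpace ℝ W] (f : W →L[ℝ] ℝ) {c : ℝ}
    (h : sSup (f '' Metric.sphere 0 1) ≤ c) (v : W) : |f v| ≤ c * ‖v‖ := by
  have hbdd : BddAbove (f '' Metric.sphere 0 1) := by
    refine ⟨‖f‖, ?_⟩
    rintro _ ⟨w, hw, rfl⟩
    have := f.le_opNorm w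
    rw [mem_sphere_zero_iff_norm.1 hw, mul_one, Real.norm_eq_abs] at this
    exact (le_abs_self _).trans this
  have hle : ∀ w : W, ‖w‖ = 1 → f w ≤ c := fun w hw =>
    (le_csSup hbdd ⟨w, mem_sphere_zero_iff_norm.2 hw, rfl⟩).trans h
  rcases eq_or_ne v 0 with rfl | hv
  · simp
  have hw : ‖(‖v‖⁻¹ : ℝ) • v‖ = 1 := norm_smul_inv_norm hv
  have hv' : 0 < ‖v‖ := norm_pos_iff.2 hv
  have h1 := hle _ hw
  have h2 := hle _ ((norm_neg _).trans hw)
  rw [map_smul, smul_eq_mul, inv_mul_le_iff₀ hv'] at h1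
  rw [map_neg, map_smul, smul_eq_mul, ← mul_neg, inv_mul_le_iff₀ hv'] at h2
  rw [abs_le]
  constructor <;> linarith

theorem exists_forall_tendsto_of_eventually_norm_le {ι W : Type*} [NormedAddCommGroup W]
    [InnerProductSpace ℝ W] [CompleteSpace W] (U : Ultrafilter ι) {s : ι → W} {c : ℝ}
    (hs : ∀ᶠ i in (U : Filter ι), ‖s i‖ ≤ c) :
    ∃ z : W, ∀ f : W →L[ℝ] ℝ, Tendsto (fun i => f (s i)) U (𝓝 (f z)) := by
  let t : ι → WeakDual ℝ W := fun i =>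
    StrongDual.toWeakDual (InnerProductSpace.toDual ℝ W (s i))
  have hts : WeakDual.toStrongDual ⁻¹' Metric.closedBall 0 c ∈ U.map t := by
    rw [Ultrafilter.mem_map]
    filter_upwards [hs] with i hi
    simpa [t] using hi
  obtain ⟨φ, -, hφ⟩ := (WeakDual.isCompact_closedBall (𝕜 := ℝ) (0 : StrongDual ℝ W) c)
    |>.ultrafilter_le_nhds (U.map t) (le_principal_iff.2 hts)
  refine ⟨(InnerProductSpace.toDual ℝ W).symm (WeakDual.toStrongDual φ), fun f => ?_⟩
  have := ((WeakDual.eval_continuous ((InnerProductSpace.toDual ℝ W).symm f)).tendsto φ).comp hφ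
  have hf : ∀ x, f x = ⟪(InnerProductSpace.toDual ℝ W).symm f, x⟫ := fun x =>
    InnerProductSpace.toDual_symm_apply.symm
  simp only [hf, real_inner_comm _ ((InnerProductSpace.toDual ℝ W).symm f),
    InnerProductSpace.toDual_symm_apply]
  simpa [t, Function.comp_def] using this

theorem tendsto_apply_of_forall_ultrafilter {W : Type*} [NormedAddCommGroup W]
    [InnerProductSpace ℝ W] [CompleteSpace W] {s : ℕ → W} {c : ℝ} (hs : ∀ n, ‖s n‖ ≤ c)
    {x : W} (h : ∀ U : Ultrafilter ℕ, (U : Filter ℕ) ≤ atTop → ∀ z : W,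
      (∀ f : W →L[ℝ] ℝ, Tendsto (fun n => f (s n)) U (𝓝 (f z))) → z = x)
    (f : W →L[ℝ] ℝ) : Tendsto (fun n => f (s n)) atTop (𝓝 (f x)) := by
  refine tendsto_iff_ultrafilter _ _ _ |>.2 fun U hU => ?_
  obtain ⟨z, hz⟩ := exists_forall_tendsto_of_eventually_norm_le U (.of_forall hs)
  exact h U hU z hz ▸ hz f

theorem IsCoercive.of_apply_self_eq {W : Type*} [NormedAddCommGroup W] [InnerProductSpace ℝ W]
    {B : W →L[ℝ] W →L[ℝ] ℝ} (hB : ∀ x, B x x = ‖x‖ ^ 2) : IsCoercive B :=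
  ⟨1, one_pos, fun x => by rw [hB, one_mul, sq]⟩

theorem IsCoercive.exists_forall_apply_eq {W : Type*} [NormedAddCommGroup W]
    [InnerProductSpace ℝ W] [CompleteSpace W] {B : W →L[ℝ] W →L[ℝ] ℝ} (hB : IsCoercive B)
    (ℓ : W →L[ℝ] ℝ) : ∃ v, ∀ φ, B v φ = ℓ φ := by
  refine ⟨hB.continuousLinearEquivOfBilin.symm ((InnerProductSpace.toDual ℝ W).symm ℓ),
    fun φ => ?_⟩
  rw [← hB.continuousLinearEquivOfBilin_apply, ContinuousLinearEquiv.apply_symm_apply,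
    InnerProductSpace.toDual_symm_apply]

theorem ContinuousLinearMap.denseRange_adjoint_comp {𝕜 X Y L : Type*} [RCLike 𝕜]
    [NormedAddCommGroup X] [InnerProductSpace 𝕜 X] [CompleteSpace X]
    [NormedAddCommGroup Y] [InnerProductSpace 𝕜 Y]
    [NormedAddCommGroup L] [InnerProductSpace 𝕜 L] [CompleteSpace L]
    (τ : X →L[𝕜] L) (C : Y →L[𝕜] L) (hτ : Function.Injective τ)
    (hτC : Set.range τ ⊆ Set.range C) : DenseRange (τ.adjoint ∘L C) := by
  change Dense ((LinearMap.range (τ.adjoint ∘L C : Y →ₗ[𝕜] X)) : Set X)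
  rw [Submodule.dense_iff_topologicalClosure_eq_top, Submodule.topologicalClosure_eq_top_iff,
    Submodule.eq_bot_iff]
  intro ψ hψ
  obtain ⟨y, hy⟩ := hτC ⟨ψ, rfl⟩
  have h : inner 𝕜 (τ ψ) (τ ψ) = 0 := by
    nth_rw 1 [← hy]
    rw [← τ.adjoint_inner_left]
    exact (Submodule.mem_orthogonal _ _).1 hψ _ ⟨y, rfl⟩
  exact (injective_iff_map_eq_zero τ).1 hτ ψ (inner_self_eq_zero.1 h)

namespace PenalizedForm

variable {W : Type*} [NormedAddCommGroup W] [InnerProductSpace ℝ W]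
  {a b : W →L[ℝ] W →L[ℝ] ℝ} {κ : ℕ → ℝ}

theorem apply_self_eq_zero (hb : ∀ x y, b x y = -b y x) (x : W) : b x x = 0 := by
  linarith [hb x x]

theorem eq_zero_of_flip (hb : ∀ x y, b x y = -b y x) {x : W} (h : ∀ y, b y x = 0) : b x = 0 := by
  ext y
  rw [hb, h, neg_zero, zero_apply]

variable [CompleteSpace W]

theorem tendsto_apply_solution (ha : ∀ x, a x x = ‖x‖ ^ 2) (hb : ∀ x y, b x y = -b y x)
    (hκ : Tendsto κ atTop atTop) {ℓ : W →L[ℝ] ℝ} {V : ℕ → W}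
    (hV : ∀ n φ, a (V n) φ + κ n * b (V n) φ = ℓ φ) {x : W} (hx : b x = 0)
    (hxℓ : ∀ φ, b φ = 0 → a x φ = ℓ φ) (f : W →L[ℝ] ℝ) :
    Tendsto (fun n => f (V n)) atTop (𝓝 (f x)) := by
  have hVbound : ∀ n, ‖V n‖ ≤ ‖ℓ‖ := fun n => by
    refine le_of_sq_le_mul (norm_nonneg _) ?_
    rw [← ha, ← add_zero (a _ _), ← mul_zero (κ n), ← apply_self_eq_zero hb (V n), hV]
    exact (le_abs_self _).trans (ℓ.le_opNorm _)
  -- A weak cluster point `z` has `b z = 0`, since `κ n * b (V n) y = ℓ y - a (V n) y` stays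
  -- bounded, and solves the limit problem on `ker b`; by coercivity of `a` it is `x`.
  refine tendsto_apply_of_forall_ultrafilter hVbound (fun U hU z hz => ?_) f
  have hbz : b z = 0 := by
    ext y
    refine tendsto_nhds_unique (hz (b.flip y)) (tendsto_zero_of_abs_mul_le (hκ.mono_left hU)
      (c := ‖ℓ‖ * ‖y‖ + ‖a‖ * ‖ℓ‖ * ‖y‖) (.of_forall fun n => ?_))
    rw [ContinuousLinearMap.flip_apply, show κ n * b (V n) y = ℓ y - a (V n) y by
      linarith [hV n y]]
    refine (abs_sub _ _).trans (add_le_add (ℓ.le_opNorm y) ((a.le_opNorm₂ _ _).trans ?_))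
    gcongr
    exact hVbound n
  have haz : ∀ φ, b φ = 0 → a z φ = ℓ φ := fun φ hφ => by
    refine tendsto_nhds_unique (hz (a.flip φ)) (tendsto_const_nhds.congr fun n => ?_)
    rw [ContinuousLinearMap.flip_apply, ← hV n φ, hb, hφ, zero_apply,
      neg_zero, mul_zero, add_zero]
  have hzx : b (z - x) = 0 := by rw [map_sub, hbz, hx, sub_zero]
  have : ‖z - x‖ ^ 2 = 0 := by
    rw [← ha, map_sub a z x, sub_apply, haz _ hzx, hxℓ _ hzx, sub_self]
  exact sub_eq_zero.1 (norm_eq_zero.1 (pow_eq_zero_iff two_ne_zero |>.1 this))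

theorem tendsto_solution (ha : ∀ x, a x x = ‖x‖ ^ 2) (hb : ∀ x y, b x y = -b y x)
    (hκ : Tendsto κ atTop atTop) {ℓ : W →L[ℝ] ℝ} {V : ℕ → W}
    (hV : ∀ n φ, a (V n) φ + κ n * b (V n) φ = ℓ φ) {x : W} (hx : b x = 0)
    (hxℓ : ∀ φ, b φ = 0 → a x φ = ℓ φ) : Tendsto V atTop (𝓝 x) := by
  have hsq : ∀ n, ‖V n - x‖ ^ 2 = (ℓ - a x) (V n) := fun n => by
    have hVx : a (V n) x = ℓ x := by
      rw [← hV n x, hb, hx, zero_apply, neg_zero, mul_zero, add_zero]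
    have hVV : a (V n) (V n) = ℓ (V n) := by
      rw [← hV n, apply_self_eq_zero hb, mul_zero, add_zero]
    simp only [← ha, map_sub, sub_apply, hVx, hVV, hxℓ x hx]
    ring
  have hlim := tendsto_apply_solution ha hb hκ hV hx hxℓ (ℓ - a x)
  rw [sub_apply, hxℓ x hx, sub_self] at hlim
  rw [tendsto_iff_norm_sub_tendsto_zero]
  simpa [← hsq, Real.sqrt_sq (norm_nonneg _)] using hlim.sqrt

variable {L Y : Type*} [NormedAddCommGroup L] [InnerProductSpace ℝ L]
  [NormedAddCommGroup Y] [InnerProductSpace ℝ Y]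

theorem exists_apply_eq_of_frequently_abs_le (ha : ∀ x, a x x = ‖x‖ ^ 2)
    (hb : ∀ x y, b x y = -b y x) (hκ : Tendsto κ atTop atTop) (ι : W →L[ℝ] L) (C : Y →ₗᵢ[ℝ] L)
    (hker : ∀ x, b x = 0 → ∃ y, ι x = C y) {u : ℕ → W} {ut : Y}
    (hweak : ∀ gt, Tendsto (fun n => ⟪ι (u n), C gt⟫) atTop (𝓝 ⟪ut, gt⟫))
    (hbdd : ∃ c, ∃ᶠ n in atTop, ∀ v, |a v (u n) + κ n * b v (u n)| ≤ c * ‖v‖) :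
    ∃ z, ι z = C ut := by
  obtain ⟨c, hc⟩ := hbdd
  set S := {n | ∀ v, |a v (u n) + κ n * b v (u n)| ≤ c * ‖v‖}
  have := frequently_iff_neBot.1 hc
  let U := Ultrafilter.of (atTop ⊓ 𝓟 S)
  have hUtop : (U : Filter ℕ) ≤ atTop := (Ultrafilter.of_le _).trans inf_le_left
  have hUS : ∀ᶠ n in (U : Filter ℕ), n ∈ S :=
    (Ultrafilter.of_le _).trans inf_le_right (mem_principal_self S)
  have hnorm : ∀ n ∈ S, ‖u n‖ ≤ |c| := fun n hn => by
    refine le_of_sq_le_mul (abs_nonneg c) ?_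
    have := hn (u n)
    rw [apply_self_eq_zero hb, mul_zero, add_zero, ha, abs_sq] at this
    exact this.trans (by gcongr; exact le_abs_self c)
  obtain ⟨z, hz⟩ := exists_forall_tendsto_of_eventually_norm_le U (hUS.mono hnorm)
  have hbz : b z = 0 := by
    refine eq_zero_of_flip hb fun v => tendsto_nhds_unique (hz (b v)) ?_
    refine tendsto_zero_of_abs_mul_le (hκ.mono_left hUtop)
      (c := c * ‖v‖ + ‖a‖ * ‖v‖ * |c|) ?_
    filter_upwards [hUS] with n hn
    rw [show κ n * b v (u n) = (a v (u n) + κ n * b v (u n)) - a v (u n) by ring]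
    refine (abs_sub _ _).trans (add_le_add (hn v) ((a.le_opNorm₂ _ _).trans ?_))
    gcongr
    exact hnorm n hn
  obtain ⟨zt, hzt⟩ := hker z hbz
  have hinner : ∀ gt, ⟪ι z, C gt⟫ = ⟪C ut, C gt⟫ := fun gt => by
    rw [C.inner_map_map]
    refine tendsto_nhds_unique ?_ ((hweak gt).mono_left hUtop)
    simpa [real_inner_comm] using hz ((innerSL ℝ (C gt)).comp ι)
  refine ⟨z, sub_eq_zero.1 (inner_self_eq_zero (𝕜 := ℝ) |>.1 ?_)⟩
  have hd : ι z - C ut = C (zt - ut) := by rw [map_sub, hzt]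
  nth_rw 2 [hd]
  rw [inner_sub_left, hinner, sub_self]

theorem exists_dense_kernel_solutions [CompleteSpace L] (ha : ∀ x, a x x = ‖x‖ ^ 2)
    (ι : W →L[ℝ] L) (C : Y →L[ℝ] L) (hι : Function.Injective ι)
    (hker : ∀ x, b x = 0 → ∃ y, ι x = C y) :
    ∃ S : Y → W, (∀ gt, b (S gt) = 0 ∧ ∀ φ, b φ = 0 → a (S gt) φ = ⟪C gt, ι φ⟫) ∧
      ∀ w, b w = 0 → w ∈ closure (Set.range S) := by
  let X := b.ker
  have hcoer : IsCoercive (a.bilinearComp X.subtypeL X.subtypeL) :=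
    .of_apply_self_eq fun x => ha x
  let A := hcoer.continuousLinearEquivOfBilin
  let τ := ι ∘L X.subtypeL
  have hdense : DenseRange (A.symm ∘ (τ.adjoint ∘L C)) :=
    A.symm.surjective.denseRange.comp (τ.denseRange_adjoint_comp C (hι.comp Subtype.val_injective)
      (by rintro _ ⟨⟨x, hx⟩, rfl⟩; exact (hker x hx).imp fun _ h => h.symm)) A.symm.continuous
  refine ⟨fun gt => A.symm (τ.adjoint (C gt)), fun gt => ⟨(A.symm _).2, fun φ hφ => ?_⟩,
    fun w hw => map_mem_closure X.subtypeL.continuous (hdense ⟨w, hw⟩) ?_⟩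
  · have := hcoer.continuousLinearEquivOfBilin_apply (A.symm (τ.adjoint (C gt))) ⟨φ, hφ⟩
    rw [ContinuousLinearEquiv.apply_symm_apply, τ.adjoint_inner_left] at this
    exact this.symm
  · rintro _ ⟨gt, rfl⟩
    exact ⟨gt, rfl⟩

theorem exists_recovery_sequence [CompleteSpace L] (ha : ∀ x, a x x = ‖x‖ ^ 2)
    (hb : ∀ x y, b x y = -b y x) (hκ : Tendsto κ atTop atTop) (ι : W →L[ℝ] L) (C : Y →ₗᵢ[ℝ] L)
    (hι : Function.Injective ι) (hker : ∀ x, b x = 0 ↔ ∃ y, ι x = C y) {u : ℕ → W} {ut : Y}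
    (hweak : ∀ gt, Tendsto (fun n => ⟪ι (u n), C gt⟫) atTop (𝓝 ⟪ut, gt⟫))
    {w y : W} (hw : b w = 0) (hy : ι y = C ut) :
    ∃ v : ℕ → W, Tendsto (fun n => ι (v n)) atTop (𝓝 (ι w)) ∧
      Tendsto (fun n => a (v n) (u n) + κ n * b (v n) (u n)) atTop (𝓝 (a w y)) := by
  obtain ⟨S, hS, hSdense⟩ := exists_dense_kernel_solutions ha ι C.toContinuousLinearMap hι
    fun x hx => (hker x).1 hx
  have hcoer : ∀ n, IsCoercive (a + κ n • b) := fun n => .of_apply_self_eq fun x => by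
    simp [ha, apply_self_eq_zero hb]
  let ℓ : Y → W →L[ℝ] ℝ := fun gt => (innerSL ℝ (C gt)).comp ι
  choose V hV using fun n gt => (hcoer n).exists_forall_apply_eq (ℓ gt)
  simp only [add_apply, smul_apply, smul_eq_mul] at hV
  have hVlim : ∀ gt, Tendsto (fun n => V n gt) atTop (𝓝 (S gt)) := fun gt =>
    tendsto_solution ha hb hκ (ℓ := ℓ gt) (fun n => hV n gt) (hS gt).1 (hS gt).2
  have hE : ∀ gt, Tendsto (fun n => a (V n gt) (u n) + κ n * b (V n gt) (u n)) atTop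
      (𝓝 (a (S gt) y)) := fun gt => by
    simp only [hV, ℓ, (hS gt).2 y ((hker y).2 ⟨ut, hy⟩), ContinuousLinearMap.comp_apply,
      innerSL_apply_apply, LinearIsometry.coe_toContinuousLinearMap, hy, C.inner_map_map]
    simpa only [real_inner_comm] using hweak gt
  obtain ⟨g, hg⟩ := exists_tendsto_diag_of_mem_closure_range
    (F := fun gt n => (ι (V n gt), a (V n gt) (u n) + κ n * b (V n gt) (u n)))
    (G := fun gt => (ι (S gt), a (S gt) y))
    (fun gt => ((ι.continuous.tendsto _).comp (hVlim gt)).prodMk_nhds (hE gt))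
    (map_mem_closure (ι.continuous.prodMk (a.flip y).continuous) (hSdense w hw)
      (by rintro _ ⟨gt, rfl⟩; exact ⟨gt, rfl⟩))
  exact ⟨fun n => V n (g n), (continuous_fst.tendsto _).comp hg, (continuous_snd.tendsto _).comp hg⟩

end PenalizedForm

theorem cmp_eq_compMeasurePreservingₗᵢ {M N : Type*} [MeasurableSpace M] [MeasurableSpace N]
    (m : MeasureTheory.Measure M) (π : M → N) (hπ : Measurable π) :
    Cmp m π hπ = MeasureTheory.Lp.compMeasurePreservingₗᵢ ℝ π ⟨hπ, rfl⟩ := by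
  funext u
  exact MeasureTheory.Lp.ext <| (MeasureTheory.MemLp.coeFn_toLp _).trans
    (MeasureTheory.Lp.coeFn_compMeasurePreserving u _).symm

namespace IsClosedForm

variable {L : Type*} [NormedAddCommGroup L] [InnerProductSpace ℝ L] {E : L → L → ℝ}
  {H : Submodule ℝ L} {α₀ K : ℝ}

/-- `𝓗` as a type of its own, to carry the inner product `ℰ^s_{α₀+1}` instead of that of `L`. -/
def Domain (_ : IsClosedForm E H α₀ K) : Type _ := H

variable (hcf : IsClosedForm E H α₀ K)

instance : AddCommGroup hcf.Domain := inferInstanceAs (AddCommGroup H)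

instance : Module ℝ hcf.Domain := inferInstanceAs (Module ℝ H)

def val : hcf.Domain →ₗ[ℝ] L := H.subtype

def ofMem (u : L) (hu : u ∈ H) : hcf.Domain := (⟨u, hu⟩ : H)

@[simp]
theorem val_ofMem (u : L) (hu : u ∈ H) : hcf.val (hcf.ofMem u hu) = u := rfl

theorem val_mem (x : hcf.Domain) : hcf.val x ∈ H := (x : H).2

theorem forall_val_iff {P : L → Prop} : (∀ x, P (hcf.val x)) ↔ ∀ u ∈ H, P u :=
  ⟨fun h u hu => h (hcf.ofMem u hu), fun h x => h _ (hcf.val_mem x)⟩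

theorem inner_le_form_self (hcf : IsClosedForm E H α₀ K) {u : L} (hu : u ∈ H) :
    ⟪u, u⟫ ≤ E u u + (α₀ + 1) * ⟪u, u⟫ := by
  linarith [hcf.nonneg u hu]

abbrev innerCore : InnerProductSpace.Core ℝ hcf.Domain where
  inner x y := (E (hcf.val x) (hcf.val y) + E (hcf.val y) (hcf.val x)) / 2 +
    (α₀ + 1) * ⟪hcf.val x, hcf.val y⟫
  conj_inner_symm x y := by
    simp only [conj_trivial, real_inner_comm (hcf.val x)]
    ring
  re_inner_nonneg x := by
    simp only [RCLike.re_to_real]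
    linarith [hcf.inner_le_form_self (hcf.val_mem x), real_inner_self_nonneg (x := hcf.val x)]
  add_left x y z := by
    simp only [map_add, hcf.add_left _ _ _ (hcf.val_mem x) (hcf.val_mem y) (hcf.val_mem z),
      hcf.add_right _ _ _ (hcf.val_mem z) (hcf.val_mem x) (hcf.val_mem y), inner_add_left]
    ring
  smul_left x y c := by
    simp only [map_smul, conj_trivial, hcf.smul_left _ _ _ (hcf.val_mem x) (hcf.val_mem y),
      hcf.smul_right _ _ _ (hcf.val_mem y) (hcf.val_mem x), real_inner_smul_left]
    ring
  definite x hx := by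
    have h : ⟪hcf.val x, hcf.val x⟫ = 0 := le_antisymm
      (by linarith [hcf.inner_le_form_self (hcf.val_mem x)]) real_inner_self_nonneg
    exact Subtype.val_injective (inner_self_eq_zero.1 h : hcf.val x = 0)

instance : NormedAddCommGroup hcf.Domain := hcf.innerCore.toNormedAddCommGroup

instance : InnerProductSpace ℝ hcf.Domain := InnerProductSpace.ofCore hcf.innerCore.toCore

theorem norm_eq_hnorm (x : hcf.Domain) : ‖x‖ = Hnorm E α₀ (hcf.val x) := by
  rw [Hnorm, norm_eq_sqrt_re_inner (𝕜 := ℝ), RCLike.re_to_real]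
  change √((_ + _) / 2 + _) = _
  ring_nf

theorem norm_val_le (x : hcf.Domain) : ‖hcf.val x‖ ≤ ‖x‖ := by
  rw [norm_eq_hnorm, ← Real.sqrt_sq (norm_nonneg _), ← real_inner_self_eq_norm_sq]
  exact Real.sqrt_le_sqrt (hcf.inner_le_form_self (hcf.val_mem x))

instance : CompleteSpace hcf.Domain := by
  refine Metric.complete_of_cauchySeq_tendsto fun x hx => ?_
  obtain ⟨l, hl, hlim⟩ := hcf.hilbert (fun n => hcf.val (x n)) (fun n => hcf.val_mem _)
    fun ε hε => by simpa [dist_eq_norm, norm_eq_hnorm] using Metric.cauchySeq_iff.1 hx ε hε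
  refine ⟨hcf.ofMem l hl, tendsto_iff_norm_sub_tendsto_zero.2 ?_⟩
  simpa [norm_eq_hnorm] using hlim

def incl : hcf.Domain →L[ℝ] L :=
  hcf.val.mkContinuous 1 fun x => by simpa using hcf.norm_val_le x

@[simp]
theorem incl_apply (x : hcf.Domain) : hcf.incl x = hcf.val x := rfl

theorem incl_injective : Function.Injective hcf.incl := Subtype.val_injective

def form : hcf.Domain →L[ℝ] hcf.Domain →L[ℝ] ℝ :=
  (LinearMap.mk₂ ℝ (fun x y => E (hcf.val x) (hcf.val y) + (α₀ + 1) * ⟪hcf.val x, hcf.val y⟫)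
    (fun x x' y => by
      simp only [map_add, hcf.add_left _ _ _ (hcf.val_mem x) (hcf.val_mem x') (hcf.val_mem y),
        inner_add_left]
      ring)
    (fun c x y => by
      simp only [map_smul, hcf.smul_left _ _ _ (hcf.val_mem x) (hcf.val_mem y),
        real_inner_smul_left, smul_eq_mul]
      ring)
    (fun x y y' => by
      simp only [map_add, hcf.add_right _ _ _ (hcf.val_mem x) (hcf.val_mem y) (hcf.val_mem y'),
        inner_add_right]
      ring)
    (fun c x y => by
      simp only [map_smul, hcf.smul_right _ _ _ (hcf.val_mem x) (hcf.val_mem y),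
        real_inner_smul_right, smul_eq_mul]
      ring)).mkContinuous₂ K fun x y => by
    simpa [norm_eq_hnorm] using hcf.sector _ (hcf.val_mem x) _ (hcf.val_mem y)

theorem form_apply (x y : hcf.Domain) :
    hcf.form x y = E (hcf.val x) (hcf.val y) + (α₀ + 1) * ⟪hcf.val x, hcf.val y⟫ := rfl

theorem form_self (x : hcf.Domain) : hcf.form x x = ‖x‖ ^ 2 := by
  rw [norm_eq_hnorm, Hnorm, Real.sq_sqrt, form_apply]
  linarith [hcf.inner_le_form_self (hcf.val_mem x), real_inner_self_nonneg (x := hcf.val x)]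

variable (Ea : L → L → ℝ) (K' : ℝ)
    (hadd_left : ∀ u v w : L, u ∈ H → v ∈ H → w ∈ H → Ea (u + v) w = Ea u w + Ea v w)
    (hsmul_left : ∀ (c : ℝ), ∀ u v : L, u ∈ H → v ∈ H → Ea (c • u) v = c * Ea u v)
    (hantisymm : ∀ u ∈ H, ∀ v ∈ H, Ea u v = -Ea v u)
    (hbound : ∀ u ∈ H, ∀ v ∈ H, |Ea u v| ≤ K' * Hnorm E α₀ u * Hnorm E α₀ v)

def antisymmForm : hcf.Domain →L[ℝ] hcf.Domain →L[ℝ] ℝ :=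
  (LinearMap.mk₂ ℝ (fun x y => Ea (hcf.val x) (hcf.val y))
    (fun x x' y => by
      simp only [map_add, hadd_left _ _ _ (hcf.val_mem x) (hcf.val_mem x') (hcf.val_mem y)])
    (fun c x y => by
      simp only [map_smul, hsmul_left _ _ _ (hcf.val_mem x) (hcf.val_mem y), smul_eq_mul])
    (fun x y y' => by
      simp only [map_add,
        hantisymm _ (hcf.val_mem x) _ (H.add_mem (hcf.val_mem y) (hcf.val_mem y')), hadd_left _ _ _ (hcf.val_mem y) (hcf.val_mem y') (hcf.val_mem x),
        hantisymm _ (hcf.val_mem x) _ (hcf.val_mem y),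
        hantisymm _ (hcf.val_mem x) _ (hcf.val_mem y')]
      ring)
    (fun c x y => by
      simp only [map_smul, hantisymm _ (hcf.val_mem x) _ (H.smul_mem c (hcf.val_mem y)),
        hsmul_left _ _ _ (hcf.val_mem y) (hcf.val_mem x),
        hantisymm _ (hcf.val_mem x) _ (hcf.val_mem y), smul_eq_mul]
      ring)).mkContinuous₂ K' fun x y => by
    simpa [norm_eq_hnorm] using hbound _ (hcf.val_mem x) _ (hcf.val_mem y)

theorem antisymmForm_apply (x y : hcf.Domain) :
    hcf.antisymmForm Ea K' hadd_left hsmul_left hantisymm hbound x y = Ea (hcf.val x) (hcf.val y) :=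
  rfl

theorem antisymmForm_eq_zero_iff (x : hcf.Domain) :
    hcf.antisymmForm Ea K' hadd_left hsmul_left hantisymm hbound x = 0 ↔
      ∀ v ∈ H, Ea (hcf.val x) v = 0 := by
  rw [ContinuousLinearMap.ext_iff]
  exact hcf.forall_val_iff (P := fun v => Ea (hcf.val x) v = 0)

theorem exists_mem_and_val_eq_iff {Y : Type*} (f : Y → L) (x : hcf.Domain) :
    (∃ y, f y ∈ H ∧ hcf.val x = f y) ↔ ∃ y, hcf.incl x = f y :=
  ⟨fun ⟨y, _, h⟩ => ⟨y, h⟩, fun ⟨y, h⟩ => ⟨y, (show hcf.val x = f y from h) ▸ hcf.val_mem x, h⟩⟩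

theorem setOf_eq_image_sphere {F : L → ℝ} {f : hcf.Domain →L[ℝ] ℝ}
    (hf : ∀ x, f x = F (hcf.val x)) :
    {s : ℝ | ∃ u ∈ H, Hnorm E α₀ u = 1 ∧ s = F u} = f '' Metric.sphere 0 1 := by
  ext s
  constructor
  · rintro ⟨u, hu, hu1, rfl⟩
    exact ⟨hcf.ofMem u hu, by simpa [norm_eq_hnorm] using hu1, by simp [hf]⟩
  · rintro ⟨x, hx, rfl⟩
    exact ⟨hcf.val x, hcf.val_mem x, by simpa [norm_eq_hnorm] using hx, hf x⟩

theorem abs_apply_le_of_sSup_lt {b : hcf.Domain →L[ℝ] hcf.Domain →L[ℝ] ℝ}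
    (hb : ∀ x y, b x y = Ea (hcf.val x) (hcf.val y)) {κ c : ℝ} {u : L} (hu : u ∈ H)
    (h : sSup {s : ℝ | ∃ v ∈ H, Hnorm E α₀ v = 1 ∧
      s = E v u + κ * Ea v u + (α₀ + 1) * ⟪v, u⟫} < c) (v : hcf.Domain) :
    |hcf.form v (hcf.ofMem u hu) + κ * b v (hcf.ofMem u hu)| ≤ c * ‖v‖ := by
  refine ContinuousLinearMap.abs_apply_le_of_sSup_image_sphere_le
    (hcf.form.flip (hcf.ofMem u hu) + κ • b.flip (hcf.ofMem u hu)) ?_ v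
  rw [← hcf.setOf_eq_image_sphere fun x => ?_]
  · exact h.le
  simp only [add_apply, smul_apply, ContinuousLinearMap.flip_apply, form_apply, hb, val_ofMem,
    smul_eq_mul]
  ring

end IsClosedForm

open MeasureTheory

theorem mosco_convergence_of_contracted_form_general
    {M : Type*} [MeasurableSpace M] {N : Type*} [MeasurableSpace N]
    (m : Measure M) (π : M → N) (hπ : Measurable π)
    (E : Lp ℝ 2 m → Lp ℝ 2 m → ℝ) (H : Submodule ℝ (Lp ℝ 2 m)) (α₀ K : ℝ)
    (hcf : IsClosedForm E H α₀ K)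
    (Ea : Lp ℝ 2 m → Lp ℝ 2 m → ℝ) (K' : ℝ)
    (hEa_add_left : ∀ u v w : Lp ℝ 2 m, u ∈ H → v ∈ H → w ∈ H →
      Ea (u + v) w = Ea u w + Ea v w)
    (hEa_smul_left : ∀ (c : ℝ), ∀ u v : Lp ℝ 2 m, u ∈ H → v ∈ H →
      Ea (c • u) v = c * Ea u v)
    (hEa_antisymm : ∀ u ∈ H, ∀ v ∈ H, Ea u v = -Ea v u)
    (hEa_bound : ∀ u ∈ H, ∀ v ∈ H, |Ea u v| ≤ K' * Hnorm E α₀ u * Hnorm E α₀ v)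
    (hasym2 : ∀ u ∈ H, ((∀ v ∈ H, Ea u v = 0) ↔
      ∃ ut : Lp ℝ 2 (m.map π), Cmp m π hπ ut ∈ H ∧ u = Cmp m π hπ ut))
    (κ : ℕ → ℝ) (hκ : Tendsto κ atTop atTop) :
    -- Condition (F1)
    (∀ (u : ℕ → Lp ℝ 2 m) (ut : Lp ℝ 2 (m.map π)),
      (∀ n, u n ∈ H) →
      (∀ (v : ℕ → Lp ℝ 2 m) (vt : Lp ℝ 2 (m.map π)),
        Tendsto (fun n => ‖Cmp m π hπ vt - v n‖) atTop (𝓝 0) →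
        Tendsto (fun n => ⟪u n, v n⟫) atTop (𝓝 ⟪ut, vt⟫)) →
      Filter.liminf (fun n =>
          ((sSup {x : ℝ | ∃ v ∈ H, Hnorm E α₀ v = 1 ∧
              x = E v (u n) + κ n * Ea v (u n) + (α₀ + 1) * ⟪v, u n⟫} : ℝ) : EReal))
        atTop < ⊤ →
      Cmp m π hπ ut ∈ H) ∧
    -- Condition (F2)
    (∀ (u : ℕ → Lp ℝ 2 m) (ut : Lp ℝ 2 (m.map π)),
      (∀ n, u n ∈ H) → Cmp m π hπ ut ∈ H →
      (∀ (v : ℕ → Lp ℝ 2 m) (vt : Lp ℝ 2 (m.map π)),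
        Tendsto (fun n => ‖Cmp m π hπ vt - v n‖) atTop (𝓝 0) →
        Tendsto (fun n => ⟪u n, v n⟫) atTop (𝓝 ⟪ut, vt⟫)) →
      ∀ vt : Lp ℝ 2 (m.map π), Cmp m π hπ vt ∈ H →
        ∃ v : ℕ → Lp ℝ 2 m, (∀ n, v n ∈ H) ∧
          Tendsto (fun n => ‖Cmp m π hπ vt - v n‖) atTop (𝓝 0) ∧
          Tendsto (fun n => E (v n) (u n) + κ n * Ea (v n) (u n)) atTop
            (𝓝 (E (Cmp m π hπ vt) (Cmp m π hπ ut)))) := by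
  obtain ⟨C, hC⟩ : ∃ C : Lp ℝ 2 (m.map π) →ₗᵢ[ℝ] Lp ℝ 2 m, Cmp m π hπ = C :=
    ⟨_, cmp_eq_compMeasurePreservingₗᵢ m π hπ⟩
  rw [hC] at hasym2 ⊢
  set b := hcf.antisymmForm Ea K' hEa_add_left hEa_smul_left hEa_antisymm hEa_bound
  have hb : ∀ x y, b x y = -b y x := fun x y =>
    hEa_antisymm _ (hcf.val_mem x) _ (hcf.val_mem y)
  have hker : ∀ x, b x = 0 ↔ ∃ yt, hcf.incl x = C yt := fun x => by
    rw [hcf.antisymmForm_eq_zero_iff, hasym2 _ (hcf.val_mem x), hcf.exists_mem_and_val_eq_iff]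
  refine ⟨fun u ut hu hweak hlim => ?_, fun u ut hu hut hweak vt hvt => ?_⟩
  · obtain ⟨c, hc⟩ := exists_frequently_lt_of_liminf_lt_top hlim
    obtain ⟨z, hz⟩ := PenalizedForm.exists_apply_eq_of_frequently_abs_le hcf.form_self hb hκ
      hcf.incl C (fun x => (hker x).1) (u := fun n => hcf.ofMem (u n) (hu n))
      (fun gt => hweak (fun _ => C gt) gt (by simp))
      ⟨c, hc.mono fun n => hcf.abs_apply_le_of_sSup_lt Ea (fun _ _ => rfl) (hu n)⟩
    exact hz ▸ hcf.val_mem z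
  · obtain ⟨v, hv, hE⟩ := PenalizedForm.exists_recovery_sequence hcf.form_self hb hκ hcf.incl C
      hcf.incl_injective hker (u := fun n => hcf.ofMem (u n) (hu n))
      (fun gt => hweak (fun _ => C gt) gt (by simp)) (w := hcf.ofMem _ hvt) (y := hcf.ofMem _ hut)
      ((hker _).2 ⟨vt, rfl⟩) rfl
    have hv' : Tendsto (fun n => ‖C vt - hcf.val (v n)‖) atTop (𝓝 0) := by
      simpa [tendsto_iff_norm_sub_tendsto_zero, norm_sub_rev] using hv
    refine ⟨fun n => hcf.val (v n), fun n => hcf.val_mem _, hv', ?_⟩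
    have hinner := (hweak _ vt hv').const_mul (α₀ + 1)
    rw [← C.inner_map_map, real_inner_comm] at hinner
    convert hE.sub hinner using 1
    · ext n
      simp only [hcf.form_apply, IsClosedForm.val_ofMem, real_inner_comm, b,
        IsClosedForm.antisymmForm_apply]
      ring
    · simp [hcf.form_apply]

/-- Let `(ℰ,𝓗)` be a closed bilinear form on `L²(m)` with constants
`α₀`, `K`, and `ℰᵃ` an antisymmetric bilinear form on `𝓗` with
`|ℰᵃ(u,v)| ≤ K' ℰ_{α₀+1}(u,u)^{1/2} ℰ_{α₀+1}(v,v)^{1/2}`; set `ℰ^κ := ℰ + κ ℰᵃ`.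
Define `𝓗̃ := {ut ∈ L²(m̃) : ut∘π ∈ 𝓗}` and `Ẽ(ut,vt) := ℰ(ut∘π, vt∘π)`, assume `𝓗̃` is dense
in `L²(m̃)`, and assume: for `u ∈ 𝓗`, `ℰᵃ(u,·) = 0` on `𝓗` iff `u = ut∘π` for some `ut ∈ 𝓗̃`.
Then for every sequence `κ_n → ∞` the forms `(ℰ^{κ_n},𝓗)` Mosco-converge to `(Ẽ,𝓗̃)`,
i.e. conditions (F1) and (F2) hold with `𝓛_n = L²(m)`, `𝓛 = L²(m̃)`, `Φ_n ut = ut∘π`. -/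
theorem mosco_convergence_of_contracted_form
    {M : Type*} [MeasurableSpace M] {N : Type*} [MeasurableSpace N]
    (m : Measure M) (π : M → N) (hπ : Measurable π)
    (E : Lp ℝ 2 m → Lp ℝ 2 m → ℝ) (H : Submodule ℝ (Lp ℝ 2 m)) (α₀ K : ℝ)
    (hcf : IsClosedForm E H α₀ K)
    (Ea : Lp ℝ 2 m → Lp ℝ 2 m → ℝ) (K' : ℝ)
    (hEa_add_left : ∀ u v w : Lp ℝ 2 m, u ∈ H → v ∈ H → w ∈ H →
      Ea (u + v) w = Ea u w + Ea v w)
    (hEa_smul_left : ∀ (c : ℝ), ∀ u v : Lp ℝ 2 m, u ∈ H → v ∈ H →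
      Ea (c • u) v = c * Ea u v)
    (hEa_antisymm : ∀ u ∈ H, ∀ v ∈ H, Ea u v = -Ea v u)
    (hEa_bound : ∀ u ∈ H, ∀ v ∈ H, |Ea u v| ≤ K' * Hnorm E α₀ u * Hnorm E α₀ v)
    (hasym2 : ∀ u ∈ H, ((∀ v ∈ H, Ea u v = 0) ↔
      ∃ ut : Lp ℝ 2 (m.map π), Cmp m π hπ ut ∈ H ∧ u = Cmp m π hπ ut))
    (hdense : Dense {ut : Lp ℝ 2 (m.map π) | Cmp m π hπ ut ∈ H})
    (κ : ℕ → ℝ) (hκ : Tendsto κ atTop atTop) :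
    -- Condition (F1)
    (∀ (u : ℕ → Lp ℝ 2 m) (ut : Lp ℝ 2 (m.map π)),
      (∀ n, u n ∈ H) →
      (∀ (v : ℕ → Lp ℝ 2 m) (vt : Lp ℝ 2 (m.map π)),
        Tendsto (fun n => ‖Cmp m π hπ vt - v n‖) atTop (𝓝 0) →
        Tendsto (fun n => ⟪u n, v n⟫) atTop (𝓝 ⟪ut, vt⟫)) →
      Filter.liminf (fun n =>
          ((sSup {x : ℝ | ∃ v ∈ H, Hnorm E α₀ v = 1 ∧
              x = E v (u n) + κ n * Ea v (u n) + (α₀ + 1) * ⟪v, u n⟫} : ℝ) : EReal))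
        atTop < ⊤ →
      Cmp m π hπ ut ∈ H) ∧
    -- Condition (F2)
    (∀ (u : ℕ → Lp ℝ 2 m) (ut : Lp ℝ 2 (m.map π)),
      (∀ n, u n ∈ H) → Cmp m π hπ ut ∈ H →
      (∀ (v : ℕ → Lp ℝ 2 m) (vt : Lp ℝ 2 (m.map π)),
        Tendsto (fun n => ‖Cmp m π hπ vt - v n‖) atTop (𝓝 0) →
        Tendsto (fun n => ⟪u n, v n⟫) atTop (𝓝 ⟪ut, vt⟫)) →
      ∀ vt : Lp ℝ 2 (m.map π), Cmp m π hπ vt ∈ H →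
        ∃ v : ℕ → Lp ℝ 2 m, (∀ n, v n ∈ H) ∧
          Tendsto (fun n => ‖Cmp m π hπ vt - v n‖) atTop (𝓝 0) ∧
          Tendsto (fun n => E (v n) (u n) + κ n * Ea (v n) (u n)) atTop
            (𝓝 (E (Cmp m π hπ vt) (Cmp m π hπ ut)))) :=
  mosco_convergence_of_contracted_form_general m π hπ E H α₀ K hcf Ea K' hEa_add_left hEa_smul_left
    hEa_antisymm hEa_bound hasym2 κ hκ

end
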